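/- The Krull dimension of the topological space 𝓜₁(A) — the supremum of the lengths n of chains Z₀ ⊊ Z₁ ⊊ ⋯ ⊊ Z_n of irreducible closed subsets — equals the cardinality of Max(A) (infinite if Max(A) is infinite). Moreover, if A has exactly n < ∞ maximal ideals, then 𝓜₁(A) has exactly 2^n points. -/

import Mathlib

open Ideal

/-- A totally multiplicative arithmetic function on the monoid `I_A` of nonzero
ideals of `A`, with values in `K`.  It is encoded as a function on all ideals,
with `f(A) = 1`, `f(𝔞𝔟) = f(𝔞) f(𝔟)` for nonzero ideals `𝔞, 𝔟`, and the
convention `f((0)) = 0`. -/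
structure TotMult (A K : Type*) [CommRing A] [Field K] where
  toFun : Ideal A → K
  map_top : toFun ⊤ = 1
  map_mul : ∀ I J : Ideal A, I ≠ ⊥ → J ≠ ⊥ → toFun (I * J) = toFun I * toFun J
  map_bot : toFun ⊥ = 0

/-- The basic open set 𝒟(a) = {f ∈ 𝓜(A) : f(aA) ≠ 0}. -/
def Dset (A K : Type*) [CommRing A] [Field K] (a : A) : Set (TotMult A K) :=
  {f | f.toFun (Ideal.span {a}) ≠ 0}

/-- The topology on 𝓜(A) whose closed sets are the sets
𝒱(S) = {f : f(aA) = 0 for all a ∈ S}, S ⊆ A∖{0}; equivalently, the topology with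
basis of open sets the sets 𝒟(a) for a ∈ A∖{0} (the family of such 𝒟(a) is closed
under finite intersections, since 𝒟(a) ∩ 𝒟(b) = 𝒟(ab) and 𝒟(1) is the whole
space, so the topology it generates has exactly the arbitrary unions
∪_{a ∈ S} 𝒟(a) = complement of 𝒱(S) as its open sets). -/
instance totMultTopology (A K : Type*) [CommRing A] [Field K] :
    TopologicalSpace (TotMult A K) :=
  TopologicalSpace.generateFrom {U | ∃ a : A, a ≠ 0 ∧ U = Dset A K a}

/-- 𝒵(f), the set of prime ideal zeros of `f`: maximal ideals `𝔭` with `f(𝔭) = 0`. -/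
def Zset (A K : Type*) [CommRing A] [Field K] (f : TotMult A K) : Set (Ideal A) :=
  {p | p.IsMaximal ∧ f.toFun p = 0}

/-- The equivalence relation on 𝓜(A): f ∼ g iff 𝒵(f) = 𝒵(g). -/
def msetoid (A K : Type*) [CommRing A] [Field K] : Setoid (TotMult A K) where
  r f g := Zset A K f = Zset A K g
  iseqv := ⟨fun _ => rfl, Eq.symm, Eq.trans⟩

/-- 𝓜₁(A) = 𝓜(A)/∼, with the quotient topology. -/
def M1 (A K : Type*) [CommRing A] [Field K] : Type _ := Quotient (msetoid A K)

instance (A K : Type*) [CommRing A] [Field K] : TopologicalSpace (M1 A K) :=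
  inferInstanceAs (TopologicalSpace (Quotient (msetoid A K)))

/-!
A function `f` is determined up to `∼` by its set of maximal zeros, and every set `Z` of maximal
ideals occurs (let `f(𝔞) = 0` iff `𝔞 = 0` or `𝔞` lies in some `𝔭 ∈ Z`), so `𝓜₁(A)` is in
bijection with the power set of `Max(A)`. Unique factorisation of ideals gives `f(aA) = 0` iff `a`
lies in a zero of `f`, so the basic open sets `𝒟(a)` are saturated; with prime avoidance this shows
that, among points with finite zero sets, `y` specialises to `x` iff `𝒵(y) ⊆ 𝒵(x)`. Strict chains
of closures of such points are therefore strict chains of subsets of `Max(A)`, and when `Max(A)` is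
finite every irreducible closed set is such a closure, since finite spaces are sober.
-/

theorem QuasiSober.of_finite (X : Type*) [TopologicalSpace X] [Finite X] : QuasiSober X := by
  classical
  have := Fintype.ofFinite X
  refine ⟨fun {S} hS hSc => ?_⟩
  obtain ⟨_, hmem, hSsub⟩ := isIrreducible_iff_sUnion_isClosed.mp hS
    (S.toFinset.image fun x => closure {x}) (by simp [isClosed_closure])
    (fun x hx => Set.mem_sUnion.mpr ⟨closure {x}, by simpa using ⟨x, hx, rfl⟩, subset_closure rfl⟩)
  obtain ⟨x, hxS, rfl⟩ := Finset.mem_image.mp hmem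
  exact ⟨x, (closure_minimal (by simpa using hxS) hSc).antisymm hSsub⟩

theorem Order.krullDim_set (α : Type*) [Finite α] : krullDim (Set α) = Nat.card α := by
  refine le_antisymm (iSup_le fun l => ?_) ?_
  · have hlen := (l.map _ Set.ncard_strictMono).head_add_length_le_nat
    have hlast := Set.ncard_le_card l.last
    simp only [LTSeries.head_map, LTSeries.last_map] at hlen
    exact_mod_cast (Nat.le_add_left _ _).trans (hlen.trans hlast)
  · let e := Finite.equivFin α
    refine le_krullDim_iff.mpr ⟨⟨Nat.card α, fun i => {x | (e x : ℕ) < i}, fun i => ?_⟩, rfl⟩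
    refine Set.ssubset_iff_of_subset (fun x hx => ?_) |>.mpr
      ⟨e.symm ⟨i, i.isLt⟩, by simp, by simp⟩
    simp only [Set.mem_ofPred_eq, Fin.val_succ, Fin.val_castSucc] at hx ⊢
    omega

theorem Nat.card_set (α : Type*) [Finite α] : Nat.card (Set α) = 2 ^ Nat.card α := by
  have := Fintype.ofFinite α
  rw [Nat.card_eq_fintype_card, Fintype.card_set, Nat.card_eq_fintype_card]

theorem MaximalSpectrum.finite_iff {A : Type*} [CommRing A] :
    Finite (MaximalSpectrum A) ↔ {p : Ideal A | p.IsMaximal}.Finite :=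
  (MaximalSpectrum.equivSubtype A).finite_iff.trans Set.finite_coe_iff

theorem MaximalSpectrum.natCard_eq_toFinset_card {A : Type*} [CommRing A]
    (hfin : {p : Ideal A | p.IsMaximal}.Finite) :
    Nat.card (MaximalSpectrum A) = hfin.toFinset.card := by
  rw [Nat.card_congr (MaximalSpectrum.equivSubtype A), ← Set.ncard_eq_toFinset_card _ hfin]
  exact Nat.card_coe_set_eq _

theorem MaximalSpectrum.exists_mem_ne_zero_forall_notMem {A : Type*} [CommRing A] [IsDomain A]
    {p : MaximalSpectrum A} (hp : p.asIdeal ≠ ⊥) {T : Set (MaximalSpectrum A)} (hT : T.Finite)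
    (hpT : p ∉ T) : ∃ a ∈ p.asIdeal, a ≠ 0 ∧ ∀ q ∈ T, a ∉ q.asIdeal := by
  -- `⊥` joins the avoided primes so that the element found is nonzero.
  have hprime : ∀ i ∈ insert ⊥ (asIdeal '' T), i ≠ ⊥ → i ≠ ⊥ → i.IsPrime := by
    rintro i (rfl | ⟨q, -, rfl⟩) - -
    exacts [Ideal.isPrime_bot, q.isMaximal.isPrime]
  have hnot : ¬(p.asIdeal : Set A) ⊆ ⋃ i ∈ insert ⊥ (asIdeal '' T), (i : Set A) := by
    rw [Ideal.subset_union_prime_finite ((hT.image _).insert ⊥) ⊥ ⊥ hprime]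
    rintro ⟨i, (rfl | ⟨q, hq, rfl⟩), hpi⟩
    · exact hp (le_bot_iff.mp hpi)
    · exact hpT (MaximalSpectrum.ext (p.isMaximal.eq_of_le q.isMaximal.ne_top hpi) ▸ hq)
  obtain ⟨a, hap, ha⟩ := Set.not_subset.mp hnot
  simp only [Set.mem_iUnion, Set.mem_insert_iff, Set.mem_image, exists_prop, not_exists] at ha
  exact ⟨a, hap, fun h0 => ha ⊥ ⟨Or.inl rfl, h0 ▸ Submodule.zero_mem _⟩,
    fun q hq haq => ha q.asIdeal ⟨Or.inr ⟨q, hq, rfl⟩, haq⟩⟩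

namespace TotMult

section

variable {A K : Type*} [CommRing A] [Field K]

def zeros (f : TotMult A K) : Set (MaximalSpectrum A) := {p | f.toFun p.asIdeal = 0}

theorem Zset_eq_image_zeros (f : TotMult A K) :
    Zset A K f = MaximalSpectrum.asIdeal '' f.zeros := by
  ext q
  refine ⟨fun ⟨hq, h0⟩ => ⟨⟨q, hq⟩, h0, rfl⟩, ?_⟩
  rintro ⟨p, hp, rfl⟩
  exact ⟨p.isMaximal, hp⟩

theorem zeros_eq_zeros_iff {f g : TotMult A K} :
    f.zeros = g.zeros ↔ Zset A K f = Zset A K g := by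
  rw [f.Zset_eq_image_zeros, g.Zset_eq_image_zeros]
  exact (Set.image_injective.mpr fun _ _ => MaximalSpectrum.ext).eq_iff.symm

end

section

variable {A : Type*} [CommRing A] [IsDomain A]

open Classical in
noncomputable def ofZeros (K : Type*) [Field K] (Z : Set (MaximalSpectrum A)) : TotMult A K where
  toFun I := if I ≠ ⊥ ∧ ∀ p ∈ Z, ¬I ≤ p.asIdeal then 1 else 0
  map_top := if_pos ⟨top_ne_bot, fun p _ h => p.isMaximal.ne_top (top_le_iff.mp h)⟩
  map_mul I J hI hJ := by
    rw [ite_zero_mul_ite_zero, one_mul]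
    refine if_congr ?_ rfl rfl
    simp only [ne_eq, mul_eq_bot, not_or, hI, hJ, not_false_eq_true, true_and, ← forall₂_and]
    exact forall₂_congr fun p _ => by rw [p.isMaximal.isPrime.mul_le, not_or]
  map_bot := if_neg fun h => h.1 rfl

theorem zeros_ofZeros {K : Type*} [Field K] (hA : ¬IsField A) (Z : Set (MaximalSpectrum A)) :
    (ofZeros K Z).zeros = Z := by
  ext p
  suffices (∃ q ∈ Z, p.asIdeal ≤ q.asIdeal) ↔ p ∈ Z by
    simpa [zeros, ofZeros, Ring.ne_bot_of_isMaximal_of_not_isField p.isMaximal hA]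
  refine ⟨fun ⟨q, hq, hpq⟩ => ?_, fun hp => ⟨p, hp, le_rfl⟩⟩
  rwa [MaximalSpectrum.ext (p.isMaximal.eq_of_le q.isMaximal.ne_top hpq)]

end

section

variable {A K : Type*} [CommRing A] [Field K] [IsDedekindDomain A]

theorem map_eq_zero_iff (hA : ¬IsField A) (f : TotMult A K) {I : Ideal A} (hI : I ≠ ⊥) :
    f.toFun I = 0 ↔ ∃ p ∈ f.zeros, I ≤ p.asIdeal := by
  constructor
  · induction I using UniqueFactorizationMonoid.induction_on_prime with
    | h₁ => exact absurd rfl hI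
    | h₂ u hu => simp [Ideal.isUnit_iff.mp hu, f.map_top]
    | h₃ J p hJ hp ih =>
      have hpmax : p.IsMaximal := (Ideal.isPrime_of_prime hp).isMaximal hp.ne_zero
      rw [f.map_mul p J hp.ne_zero hJ, mul_eq_zero]
      rintro (h | h)
      · exact ⟨⟨p, hpmax⟩, h, Ideal.mul_le_left⟩
      · obtain ⟨q, hq, hJq⟩ := ih hJ h
        exact ⟨q, hq, Ideal.mul_le_right.trans hJq⟩
  · rintro ⟨p, hp, hIp⟩
    obtain ⟨J, rfl⟩ := Ideal.dvd_iff_le.mpr hIp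
    have hJ : J ≠ ⊥ := right_ne_zero_of_mul hI
    rw [f.map_mul _ J (Ring.ne_bot_of_isMaximal_of_not_isField p.isMaximal hA) hJ, hp, zero_mul]

theorem mem_Dset_iff (hA : ¬IsField A) (f : TotMult A K) {a : A} (ha : a ≠ 0) :
    f ∈ Dset A K a ↔ ∀ p ∈ f.zeros, a ∉ p.asIdeal := by
  simp [Dset, f.map_eq_zero_iff hA (Ideal.span_singleton_eq_bot.not.mpr ha)]

theorem specializes_of_zeros_subset (hA : ¬IsField A) {f g : TotMult A K}
    (h : g.zeros ⊆ f.zeros) : g ⤳ f := by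
  rw [specializes_iff_nhds, totMultTopology, TopologicalSpace.nhds_generateFrom (a := f)]
  refine le_iInf₂ fun s ⟨hfs, a, ha, hs⟩ => Filter.le_principal_iff.mpr ?_
  subst hs
  have hg : g ∈ Dset A K a :=
    (g.mem_Dset_iff hA ha).mpr fun p hp => (f.mem_Dset_iff hA ha).mp hfs p (h hp)
  exact (TopologicalSpace.isOpen_generateFrom_of_mem (g := {U | ∃ a : A, a ≠ 0 ∧ U = Dset A K a})
    ⟨a, ha, rfl⟩).mem_nhds hg

end

end TotMult

namespace M1

open Order TopologicalSpace

variable {A K : Type*} [CommRing A] [Field K]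

def zeros : M1 A K → Set (MaximalSpectrum A) :=
  Quotient.lift TotMult.zeros fun _ _ => TotMult.zeros_eq_zeros_iff.mpr

theorem zeros_injective : Function.Injective (zeros : M1 A K → Set (MaximalSpectrum A)) :=
  Quotient.ind₂ fun _ _ h => Quotient.sound (TotMult.zeros_eq_zeros_iff.mp h)

variable [IsDedekindDomain A]

noncomputable def zerosEquiv (hA : ¬IsField A) : M1 A K ≃ Set (MaximalSpectrum A) :=
  Equiv.ofBijective zeros ⟨zeros_injective, fun Z =>
    ⟨Quotient.mk _ (TotMult.ofZeros K Z), TotMult.zeros_ofZeros hA Z⟩⟩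

theorem isOpen_setOf_forall_notMem_zeros (hA : ¬IsField A) {a : A} (ha : a ≠ 0) :
    IsOpen {x : M1 A K | ∀ p ∈ x.zeros, a ∉ p.asIdeal} := by
  have hpre : Quotient.mk _ ⁻¹' {x : M1 A K | ∀ p ∈ x.zeros, a ∉ p.asIdeal} = Dset A K a :=
    Set.ext fun f => (f.mem_Dset_iff hA ha).symm
  have hD : IsOpen (Dset A K a) := isOpen_generateFrom_of_mem ⟨a, ha, rfl⟩
  rw [← hpre] at hD
  exact isOpen_coinduced.mpr hD

theorem specializes_iff (hA : ¬IsField A) {x y : M1 A K} (hx : x.zeros.Finite) :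
    y ⤳ x ↔ y.zeros ⊆ x.zeros := by
  refine ⟨fun hyx p hp => by_contra fun hpx => ?_, fun h => ?_⟩
  · obtain ⟨a, hap, ha, havoid⟩ := MaximalSpectrum.exists_mem_ne_zero_forall_notMem
      (Ring.ne_bot_of_isMaximal_of_not_isField p.isMaximal hA) hx hpx
    exact hyx.mem_open (isOpen_setOf_forall_notMem_zeros hA ha) havoid p hp hap
  · induction x using Quotient.inductionOn
    induction y using Quotient.inductionOn
    exact (TotMult.specializes_of_zeros_subset hA h).map continuous_quotient_mk'

theorem closure_singleton_ssubset_iff (hA : ¬IsField A) {x y : M1 A K} (hx : x.zeros.Finite)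
    (hy : y.zeros.Finite) : closure {y} ⊂ closure {x} ↔ x.zeros ⊂ y.zeros := by
  simp only [ssubset_iff_subset_not_subset, ← specializes_iff_closure_subset,
    specializes_iff hA hx, specializes_iff hA hy]

theorem topologicalKrullDim_le (hA : ¬IsField A) [Finite (MaximalSpectrum A)] :
    topologicalKrullDim (M1 A K) ≤ Nat.card (MaximalSpectrum A) := by
  have : Finite (M1 A K) := .of_equiv _ (zerosEquiv hA).symm
  have : QuasiSober (M1 A K) := .of_finite _
  let gen (C : IrreducibleCloseds (M1 A K)) : M1 A K := C.isIrreducible.genericPoint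
  have hgen (C : IrreducibleCloseds (M1 A K)) : closure {gen C} = C :=
    C.isIrreducible.closure_genericPoint C.isClosed
  have hmono : StrictMono fun C => OrderDual.toDual (gen C).zeros := fun C D hCD => by
    rw [OrderDual.toDual_lt_toDual,
      ← closure_singleton_ssubset_iff hA (Set.toFinite _) (Set.toFinite _), hgen, hgen]
    exact hCD
  calc topologicalKrullDim (M1 A K) ≤ krullDim (Set (MaximalSpectrum A))ᵒᵈ :=
        krullDim_le_of_strictMono _ hmono
    _ = Nat.card (MaximalSpectrum A) := by rw [krullDim_orderDual, krullDim_set]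

theorem ncard_le_topologicalKrullDim (hA : ¬IsField A) {T : Set (MaximalSpectrum A)}
    (hT : T.Finite) : (T.ncard : WithBot ℕ∞) ≤ topologicalKrullDim (M1 A K) := by
  have := hT.to_subtype
  let pt (S : Set T) : M1 A K := (zerosEquiv hA).symm (Subtype.val '' S)
  have hpt (S : Set T) : (pt S).zeros = Subtype.val '' S := (zerosEquiv hA).apply_symm_apply _
  have hmono : StrictMono fun S : (Set T)ᵒᵈ =>
      (⟨closure {pt (OrderDual.ofDual S)}, isIrreducible_singleton.closure, isClosed_closure⟩ :
        IrreducibleCloseds (M1 A K)) := fun S S' hSS' => by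
    rw [← SetLike.coe_ssubset_coe, IrreducibleCloseds.coe_mk, IrreducibleCloseds.coe_mk,
      closure_singleton_ssubset_iff hA, hpt, hpt]
    · exact Subtype.val_injective.image_strictMono hSS'
    all_goals rw [hpt]; exact (Set.toFinite _).image _
  calc (T.ncard : WithBot ℕ∞) = krullDim (Set T)ᵒᵈ := by
        rw [krullDim_orderDual, krullDim_set, Nat.card_coe_set_eq]
    _ ≤ topologicalKrullDim (M1 A K) := krullDim_le_of_strictMono _ hmono

end M1

theorem statement19_general (A K : Type*) [CommRing A] [IsDedekindDomain A]
    (hA : ¬IsField A) [Field K] :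
    (∀ (hfin : {p : Ideal A | p.IsMaximal}.Finite),
      topologicalKrullDim (M1 A K) = hfin.toFinset.card) ∧
    ({p : Ideal A | p.IsMaximal}.Infinite → topologicalKrullDim (M1 A K) = ⊤) ∧
    (∀ (hfin : {p : Ideal A | p.IsMaximal}.Finite),
      Nat.card (M1 A K) = 2 ^ hfin.toFinset.card) := by
  refine ⟨fun hfin => ?_, fun hinf => ?_, fun hfin => ?_⟩
  · have := MaximalSpectrum.finite_iff.mpr hfin
    rw [← MaximalSpectrum.natCard_eq_toFinset_card hfin]
    refine (M1.topologicalKrullDim_le hA).antisymm ?_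
    simpa using M1.ncard_le_topologicalKrullDim (K := K) hA (Set.toFinite Set.univ)
  · have : Infinite (MaximalSpectrum A) :=
      not_finite_iff_infinite.mp (MaximalSpectrum.finite_iff.not.mpr hinf)
    refine ENat.WithBot.eq_top_iff_forall_ge.mpr fun m => ?_
    obtain ⟨T, -, hT, rfl⟩ := Set.infinite_univ.exists_subset_ncard_eq (α := MaximalSpectrum A) m
    exact M1.ncard_le_topologicalKrullDim hA hT
  · have := MaximalSpectrum.finite_iff.mpr hfin
    rw [Nat.card_congr (M1.zerosEquiv hA), Nat.card_set,
      MaximalSpectrum.natCard_eq_toFinset_card hfin]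

theorem statement19 (A K : Type*) [CommRing A] [IsDomain A] [IsDedekindDomain A]
    (hA : ¬IsField A) [Field K] :
    (∀ (hfin : {p : Ideal A | p.IsMaximal}.Finite),
      topologicalKrullDim (M1 A K) = hfin.toFinset.card) ∧
    ({p : Ideal A | p.IsMaximal}.Infinite → topologicalKrullDim (M1 A K) = ⊤) ∧
    (∀ (hfin : {p : Ideal A | p.IsMaximal}.Finite),
      Nat.card (M1 A K) = 2 ^ hfin.toFinset.card) :=
  statement19_general A K hA
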